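/- arXiv:1711.02394 — 2 statements merged into one kernel-verified Lean document; each statement's English description precedes it below -/
import Mathlib

section
/- Let G be a connected graph of order n containing a cycle C_l = v₁v₂⋯v_l v₁ of even length l = 2k such that G − E(C_l) has exactly l components G₁,…,G_l with v_i ∈ G_i. With n_i = |V(G_i)|, m_i = |E(G_i)|, m = Σ_{i=1}^{l} m_i, x_i = n_i + n_{i−1} + ⋯ + n_{i−k+1}, y_i = m_i + m_{i−1} + ⋯ + m_{i−k+1} (subscripts modulo l), and e_i = v_i v_{i+1}, one has Σ_{i=1}^{2k} [n_{v_i}(e_i|G)·m_{v_{i+1}}(e_i|G) + n_{v_{i+1}}(e_i|G)·m_{v_i}(e_i|G)] = 2k²(n+m) − 2kn + Σ_{i=1}^{2k} [(x_i − k)(m − y_i) + y_i(n − x_i − k)]. -/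
open SimpleGraph Finset
open scoped Classical

noncomputable section

variable {V : Type*}

/-- number of vertices strictly closer to `u` than to `v` -/
def szN (G : SimpleGraph V) (u v : V) : ℕ :=
  {w : V | G.dist u w < G.dist v w}.ncard

/-- distance from an edge (unordered pair) to a vertex -/
def eDist (G : SimpleGraph V) (e : Sym2 V) (w : V) : ℕ :=
  Sym2.lift ⟨fun x y => min (G.dist x w) (G.dist y w), fun x y => min_comm _ _⟩ e

/-- number of edges strictly closer to `u` than to `v` -/
def szM (G : SimpleGraph V) (u v : V) : ℕ :=
  {e : Sym2 V | e ∈ G.edgeSet ∧ eDist G e u < eDist G e v}.ncard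

/-- edge Szeged index -/
def szE [Fintype V] (G : SimpleGraph V) : ℕ :=
  ∑ e ∈ G.edgeFinset,
    Sym2.lift ⟨fun u v => szM G u v * szM G v u, fun u v => mul_comm _ _⟩ e

/-- edge-vertex Szeged index -/
def szEV [Fintype V] (G : SimpleGraph V) : ℚ :=
  (1/2) * ∑ e ∈ G.edgeFinset,
    Sym2.lift ⟨fun u v => ((szN G u v * szM G v u + szN G v u * szM G u v : ℕ) : ℚ),
      fun u v => by push_cast; ring⟩ e

/-- the graph `G - E(C_l)` obtained by deleting the edges of the cycle
`v₀ v₁ ⋯ v_{l-1} v₀` -/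
def offCycle (G : SimpleGraph V) (l : ℕ) (v : ZMod l → V) : SimpleGraph V :=
  G.deleteEdges {e : Sym2 V | ∃ i : ZMod l, e = s(v i, v (i + 1))}

/-- `nᵢ`: the number of vertices of the component `Gᵢ` of `G - E(C_l)`
containing `vᵢ` -/
def compV (G : SimpleGraph V) (l : ℕ) (v : ZMod l → V) (i : ZMod l) : ℕ :=
  {w : V | (offCycle G l v).Reachable (v i) w}.ncard

/-- `mᵢ`: the number of edges of the component `Gᵢ` of `G - E(C_l)`
containing `vᵢ` -/
def compE (G : SimpleGraph V) (l : ℕ) (v : ZMod l → V) (i : ZMod l) : ℕ :=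
  {e : Sym2 V | e ∈ (offCycle G l v).edgeSet ∧
    ∀ w ∈ e, (offCycle G l v).Reachable (v i) w}.ncard

/-- `m = m₁ + ⋯ + m_l` -/
def totE (G : SimpleGraph V) (l : ℕ) (v : ZMod l → V) : ℕ :=
  ∑ i ∈ Finset.range l, compE G l v (i : ZMod l)

/-- `xᵢ = nᵢ + n_{i-1} + ⋯ + n_{i-k+1}` -/
def xSum (G : SimpleGraph V) (l : ℕ) (v : ZMod l → V) (k : ℕ) (i : ZMod l) : ℕ :=
  ∑ t ∈ Finset.range k, compV G l v (i - (t : ZMod l))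

/-- `yᵢ = mᵢ + m_{i-1} + ⋯ + m_{i-k+1}` -/
def ySum (G : SimpleGraph V) (l : ℕ) (v : ZMod l → V) (k : ℕ) (i : ZMod l) : ℕ :=
  ∑ t ∈ Finset.range k, compE G l v (i - (t : ZMod l))

/-!
Write `|x|` for the cyclic distance `x.valMinAbs.natAbs` on `ZMod l` and let `c w` be the index
of the component of `G - E(C_l)` containing `w`. Then
`d_G(v_i, w) = |i - c w| + d_{G - E(C_l)}(v_{c w}, w)`: the right side is the length of a walk
along the cycle followed by one inside the component, and it changes by at most one along any
edge of `G`. For `l = 2k`, passing from `v_i` to `v_{i+1}` changes `|i - j|` by `+1` exactly when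
`(i - j).val < k`, so a vertex or an off-cycle edge of `G_j` is closer to `v_i` iff
`j ∈ {i, i - 1, …, i - k + 1}`; of the cycle edges, `k - 1` are closer to each end of `e_i`
and the antipodal one is equidistant. Hence `n_{v_i} = x_i`, `n_{v_{i+1}} = n - x_i`,
`m_{v_i} = y_i + k - 1`, `m_{v_{i+1}} = m - y_i + k - 1`, and the identity is algebra.
-/

namespace ZMod

variable {l k : ℕ}

lemma val_add_one_eq_or [NeZero l] (hl : l ≠ 1) (x : ZMod l) :
    (x + 1).val = x.val + 1 ∨ x.val + 1 = (x + 1).val + l := by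
  rw [← val_one'' hl]
  rcases lt_or_ge (x.val + (1 : ZMod l).val) l with h | h
  · exact .inl (val_add_of_lt h)
  · exact .inr (val_add_val_of_le h)

lemma natAbs_valMinAbs_one_le [NeZero l] : (1 : ZMod l).valMinAbs.natAbs ≤ 1 := by
  rw [valMinAbs_natAbs_eq_min, val_one_eq_one_mod]
  exact (min_le_left _ _).trans (Nat.mod_le _ _)

lemma natAbs_valMinAbs_add_one_le [NeZero l] (x : ZMod l) :
    (x + 1).valMinAbs.natAbs ≤ x.valMinAbs.natAbs + 1 :=
  (natAbs_valMinAbs_add_le x 1).trans <|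
    (Int.natAbs_add_le _ _).trans (Nat.add_le_add_left natAbs_valMinAbs_one_le _)

lemma natAbs_valMinAbs_le_add_one_add_one [NeZero l] (x : ZMod l) :
    x.valMinAbs.natAbs ≤ (x + 1).valMinAbs.natAbs + 1 := by
  calc x.valMinAbs.natAbs = (x + 1 + -1).valMinAbs.natAbs := by rw [add_neg_cancel_right]
    _ ≤ (x + 1).valMinAbs.natAbs + (-1 : ZMod l).valMinAbs.natAbs :=
      (natAbs_valMinAbs_add_le _ _).trans (Int.natAbs_add_le _ _)
    _ ≤ (x + 1).valMinAbs.natAbs + 1 := by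
      rw [natAbs_valMinAbs_neg]; exact Nat.add_le_add_left natAbs_valMinAbs_one_le _

lemma natAbs_valMinAbs_add_one_of_even [NeZero l] (hl : l = 2 * k) (x : ZMod l) :
    (x.val < k → (x + 1).valMinAbs.natAbs = x.valMinAbs.natAbs + 1) ∧
      (k ≤ x.val → x.valMinAbs.natAbs = (x + 1).valMinAbs.natAbs + 1) := by
  have := NeZero.ne l
  have := val_lt x
  rw [valMinAbs_natAbs_eq_min, valMinAbs_natAbs_eq_min]
  rcases val_add_one_eq_or (by omega) x with h | h <;> omega

lemma apply_lt_apply_add_one_iff [NeZero l] (hl : l = 2 * k) {f : ZMod l → ℕ} {j : ZMod l}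
    {r : ℕ} (hf : ∀ i, f i = (i - j).valMinAbs.natAbs + r) (i : ZMod l) :
    (f i < f (i + 1) ↔ (i - j).val < k) ∧ (f (i + 1) < f i ↔ ¬(i - j).val < k) := by
  have := natAbs_valMinAbs_add_one_of_even hl (i - j)
  rw [hf, hf, add_sub_right_comm]
  omega

lemma min_natAbs_valMinAbs_lt_iff [NeZero l] (hl : l = 2 * k) (x : ZMod l) :
    (min x.valMinAbs.natAbs (x - 1).valMinAbs.natAbs <
        min (x + 1).valMinAbs.natAbs x.valMinAbs.natAbs ↔ 1 ≤ x.val ∧ x.val < k) ∧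
      (min (x + 1).valMinAbs.natAbs x.valMinAbs.natAbs <
        min x.valMinAbs.natAbs (x - 1).valMinAbs.natAbs ↔ k < x.val) := by
  have := NeZero.ne l
  have := natAbs_valMinAbs_add_one_of_even hl x
  have := natAbs_valMinAbs_add_one_of_even hl (x - 1)
  have := val_add_one_eq_or (by omega) (x - 1)
  have := val_lt (x - 1)
  simp only [sub_add_cancel] at *
  omega

end ZMod

lemma Set.ncard_setOf_eq_card_filter {α : Type*} [Fintype α] (p : α → Prop) [DecidablePred p] :
    {a | p a}.ncard = #{a | p a} := by
  rw [← coe_filter_univ, Set.ncard_coe_finset]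

namespace Finset

variable {α : Type*} {l k : ℕ} [NeZero l]

lemma card_filter_val_sub_lt (hk : k ≤ l) (s : Finset α) (f : α → ZMod l) (i : ZMod l) :
    #{a ∈ s | (i - f a).val < k} = ∑ t ∈ range k, #{a ∈ s | f a = i - t} := by
  rw [card_eq_sum_card_fiberwise (f := fun a => (i - f a).val) (t := range k)
    fun a ha => mem_range.2 (mem_filter.1 ha).2]
  refine sum_congr rfl fun t ht => congrArg card (ext fun a => ?_)
  have htl : t < l := (mem_range.1 ht).trans_le hk
  simp only [mem_filter]
  constructor
  · rintro ⟨⟨has, -⟩, rfl⟩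
    exact ⟨has, by rw [ZMod.natCast_zmod_val, sub_sub_cancel]⟩
  · rintro ⟨has, hfa⟩
    have hval : (i - f a).val = t := by rw [hfa, sub_sub_cancel, ZMod.val_cast_of_lt htl]
    exact ⟨⟨has, hval ▸ mem_range.1 ht⟩, hval⟩

lemma card_filter_val_sub (P : ℕ → Prop) [DecidablePred P] (i : ZMod l) :
    #{j : ZMod l | P (i - j).val} = #{t ∈ range l | P t} := by
  refine card_nbij' (fun j => (i - j).val) (fun t => i - t) (fun j hj => ?_) (fun t ht => ?_)
    (fun j _ => ?_) (fun t ht => ?_)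
  · simpa using And.intro (ZMod.val_lt (i - j)) (mem_filter.1 hj).2
  · simp only [coe_filter, mem_range, Set.mem_ofPred_eq] at ht
    simpa [ZMod.val_cast_of_lt ht.1] using ht.2
  · simp
  · simp only [coe_filter, mem_range, Set.mem_ofPred_eq] at ht
    simp [ZMod.val_cast_of_lt ht.1]

lemma sum_range_natCast_zmod {M : Type*} [AddCommMonoid M] (F : ZMod l → M) :
    ∑ t ∈ range l, F t = ∑ j, F j :=
  sum_nbij' (fun t => (t : ZMod l)) ZMod.val (fun _ _ => mem_univ _)
    (fun j _ => mem_range.2 (ZMod.val_lt j)) (fun _ ht => ZMod.val_cast_of_lt (mem_range.1 ht))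
    (fun j _ => ZMod.natCast_zmod_val j) fun _ _ => rfl

end Finset

namespace SimpleGraph

variable {G : SimpleGraph V} {f : V → ℕ} {u w : V}

lemma Walk.apply_le_apply_add_length (hf : ∀ a b, G.Adj a b → f b ≤ f a + 1)
    (p : G.Walk u w) : f w ≤ f u + p.length := by
  induction p with
  | nil => simp
  | cons h _ ih =>
    rw [Walk.length_cons]
    have := hf _ _ h
    omega

lemma Reachable.apply_le_apply_add_dist (hf : ∀ a b, G.Adj a b → f b ≤ f a + 1)
    (h : G.Reachable u w) : f w ≤ f u + G.dist u w := by
  obtain ⟨p, hp⟩ := h.exists_walk_length_eq_dist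
  exact hp ▸ p.apply_le_apply_add_length hf

end SimpleGraph

/-- `c w` is the index `j` of the component `G_j` of `G - E(C_l)` containing `w`. -/
def IsComponentIndex (G : SimpleGraph V) (l : ℕ) (v : ZMod l → V) (c : V → ZMod l) : Prop :=
  ∀ j w, (offCycle G l v).Reachable (v j) w ↔ c w = j

section OffCycle

variable {G : SimpleGraph V} {l : ℕ} {v : ZMod l → V} {c : V → ZMod l}

lemma offCycle_le : offCycle G l v ≤ G := deleteEdges_le _

lemma mem_edgeSet_offCycle {e : Sym2 V} :
    e ∈ (offCycle G l v).edgeSet ↔ e ∈ G.edgeSet ∧ ¬∃ j, e = s(v j, v (j + 1)) := by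
  simp [offCycle]

lemma exists_walk_of_add_eq (hadj : ∀ i, G.Adj (v i) (v (i + 1))) {i j : ZMod l} (t : ℕ)
    (h : i + t = j) : ∃ p : G.Walk (v i) (v j), p.length = t := by
  induction t generalizing j with
  | zero =>
    obtain rfl : i = j := by simpa using h
    exact ⟨.nil, rfl⟩
  | succ t ih =>
    obtain ⟨p, hp⟩ := ih rfl
    exact ⟨(p.concat (hadj _)).copy rfl (congrArg v (by rw [← h]; push_cast; ring)),
      by simp [hp]⟩

lemma exists_walk_length_eq_natAbs_valMinAbs (hadj : ∀ i, G.Adj (v i) (v (i + 1)))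
    (i j : ZMod l) : ∃ p : G.Walk (v i) (v j), p.length = (i - j).valMinAbs.natAbs := by
  have hij := ZMod.coe_valMinAbs (i - j)
  obtain ⟨t, ht | ht⟩ : ∃ t : ℕ, (i - j).valMinAbs = t ∨ (i - j).valMinAbs = -t :=
    ⟨_, Int.natAbs_eq _⟩
  · rw [ht, Int.cast_natCast] at hij
    obtain ⟨p, hp⟩ := exists_walk_of_add_eq hadj t (show j + t = i by linear_combination hij)
    exact ⟨p.reverse, by simp [hp, ht]⟩
  · rw [ht, Int.cast_neg, Int.cast_natCast] at hij
    obtain ⟨p, hp⟩ := exists_walk_of_add_eq hadj t (show i + t = j by linear_combination -hij)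
    exact ⟨p, by simp [hp, ht]⟩

lemma cycleEdge_injective (hl : 3 ≤ l) (hv : Function.Injective v) :
    Function.Injective fun j : ZMod l => s(v j, v (j + 1)) := by
  intro i j h
  rcases Sym2.eq_iff.1 h with ⟨hij, -⟩ | ⟨h₁, h₂⟩
  · exact hv hij
  · have htwo : ((2 : ℕ) : ZMod l) = 0 := by
      push_cast
      linear_combination hv h₂ - hv h₁
    have := Nat.le_of_dvd two_pos ((ZMod.natCast_eq_zero_iff 2 l).1 htwo)
    omega

lemma IsComponentIndex.apply_self (hc : IsComponentIndex G l v c) (j : ZMod l) : c (v j) = j :=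
  (hc j (v j)).1 .rfl

lemma IsComponentIndex.apply_eq_of_adj (hc : IsComponentIndex G l v c) {a b : V}
    (h : (offCycle G l v).Adj a b) : c a = c b :=
  ((hc (c a) b).1 (((hc _ _).2 rfl).trans h.reachable)).symm

lemma IsComponentIndex.apply_eq_of_mem_edgeSet (hc : IsComponentIndex G l v c) {e : Sym2 V}
    (he : e ∈ (offCycle G l v).edgeSet) {w : V} (hw : w ∈ e) :
    c w = c e.out.1 := by
  induction e using Sym2.ind with
  | _ a b =>
    have hab : ∀ x ∈ s(a, b), c x = c a := by
      rintro x hx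
      rcases Sym2.mem_iff.1 hx with rfl | rfl
      exacts [rfl, (hc.apply_eq_of_adj he).symm]
    rw [hab w hw, hab _ (Sym2.out_fst_mem _)]

lemma compV_eq_card [Fintype V] (hc : IsComponentIndex G l v c) (j : ZMod l) :
    compV G l v j = #{w | c w = j} := by
  simp only [compV, hc j, Set.ncard_setOf_eq_card_filter]

lemma compE_eq_card [Fintype V] (hc : IsComponentIndex G l v c) (j : ZMod l) :
    compE G l v j = #{e ∈ (offCycle G l v).edgeFinset | c e.out.1 = j} := by
  rw [compE, ← Set.ncard_coe_finset]
  congr 1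
  ext e
  simp only [hc j, coe_filter, mem_edgeFinset, Set.mem_ofPred_eq]
  refine and_congr_right fun he => ⟨fun h => h _ (Sym2.out_fst_mem e), fun h w hw => ?_⟩
  rw [hc.apply_eq_of_mem_edgeSet he hw, h]

variable [NeZero l] {k : ℕ}

lemma natAbs_valMinAbs_add_dist_le (hc : IsComponentIndex G l v c) (i : ZMod l) {a b : V}
    (hab : G.Adj a b) :
    (i - c b).valMinAbs.natAbs + (offCycle G l v).dist (v (c b)) b ≤
      (i - c a).valMinAbs.natAbs + (offCycle G l v).dist (v (c a)) a + 1 := by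
  by_cases hcyc : (offCycle G l v).Adj a b
  · rw [← hc.apply_eq_of_adj hcyc]
    rcases hcyc.diff_dist_adj (u := v (c a)) with h | h | h <;> omega
  · obtain ⟨t, ht⟩ : ∃ t, s(a, b) = s(v t, v (t + 1)) := by
      by_contra h
      exact hcyc ((deleteEdges_adj ..).2 ⟨hab, h⟩)
    have := ZMod.natAbs_valMinAbs_add_one_le (i - (t + 1))
    have := ZMod.natAbs_valMinAbs_le_add_one_add_one (i - (t + 1))
    rw [show i - (t + 1) + 1 = i - t by ring] at *
    rcases Sym2.eq_iff.1 ht with ⟨rfl, rfl⟩ | ⟨rfl, rfl⟩ <;> simp [hc.apply_self] <;> omega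

theorem dist_eq_natAbs_valMinAbs_add_dist (hadj : ∀ i, G.Adj (v i) (v (i + 1)))
    (hc : IsComponentIndex G l v c) (i : ZMod l) (w : V) :
    G.dist (v i) w = (i - c w).valMinAbs.natAbs + (offCycle G l v).dist (v (c w)) w := by
  obtain ⟨p, hp⟩ := exists_walk_length_eq_natAbs_valMinAbs hadj i (c w)
  obtain ⟨q, hq⟩ := ((hc _ _).2 rfl).exists_walk_length_eq_dist
  let r := p.append (q.mapLe offCycle_le)
  refine le_antisymm (by simpa [r, hp, hq] using dist_le r) ?_
  simpa [hc.apply_self] using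
    r.reachable.apply_le_apply_add_dist fun a b => natAbs_valMinAbs_add_dist_le hc i

lemma eDist_eq_of_mem_edgeSet (hadj : ∀ i, G.Adj (v i) (v (i + 1)))
    (hc : IsComponentIndex G l v c) {e : Sym2 V}
    (he : e ∈ (offCycle G l v).edgeSet) (i : ZMod l) :
    eDist G e (v i) =
      (i - c e.out.1).valMinAbs.natAbs + eDist (offCycle G l v) e (v (c e.out.1)) := by
  induction e using Sym2.ind with
  | _ a b =>
    have ha := hc.apply_eq_of_mem_edgeSet he (Sym2.mem_mk_left a b)
    have hb := hc.apply_eq_of_mem_edgeSet he (Sym2.mem_mk_right a b)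
    simp only [eDist, Sym2.lift_mk, G.dist_comm (v := v i),
      (offCycle G l v).dist_comm (v := v (c _)), dist_eq_natAbs_valMinAbs_add_dist hadj hc, ha, hb]
    omega

lemma eDist_cycleEdge (hadj : ∀ i, G.Adj (v i) (v (i + 1)))
    (hc : IsComponentIndex G l v c) (i j : ZMod l) :
    eDist G s(v j, v (j + 1)) (v i) =
      min (i - j).valMinAbs.natAbs (i - j - 1).valMinAbs.natAbs := by
  simp only [eDist, Sym2.lift_mk, G.dist_comm (v := v i), dist_eq_natAbs_valMinAbs_add_dist hadj hc,
    hc.apply_self, dist_self, add_zero, sub_add_eq_sub_sub]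

lemma card_cycleEdge_closer (hl : l = 2 * k) (hadj : ∀ i, G.Adj (v i) (v (i + 1)))
    (hc : IsComponentIndex G l v c) (i : ZMod l) :
    #{j | eDist G s(v j, v (j + 1)) (v i) < eDist G s(v j, v (j + 1)) (v (i + 1))} = k - 1 := by
  have key : ∀ j, eDist G s(v j, v (j + 1)) (v i) < eDist G s(v j, v (j + 1)) (v (i + 1)) ↔
      1 ≤ (i - j).val ∧ (i - j).val < k := fun j => by
    rw [eDist_cycleEdge hadj hc, eDist_cycleEdge hadj hc, add_sub_right_comm, add_sub_cancel_right]
    exact (ZMod.min_natAbs_valMinAbs_lt_iff hl (i - j)).1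
  rw [filter_congr fun j _ => key j]
  refine (card_filter_val_sub (fun t => 1 ≤ t ∧ t < k) i).trans ?_
  rw [← Nat.card_Ico]
  congr 1
  ext t
  simp only [mem_filter, mem_range, mem_Ico]
  omega

lemma card_cycleEdge_farther (hl : l = 2 * k) (hadj : ∀ i, G.Adj (v i) (v (i + 1)))
    (hc : IsComponentIndex G l v c) (i : ZMod l) :
    #{j | eDist G s(v j, v (j + 1)) (v (i + 1)) < eDist G s(v j, v (j + 1)) (v i)} = k - 1 := by
  have key : ∀ j, eDist G s(v j, v (j + 1)) (v (i + 1)) < eDist G s(v j, v (j + 1)) (v i) ↔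
      k < (i - j).val := fun j => by
    rw [eDist_cycleEdge hadj hc, eDist_cycleEdge hadj hc, add_sub_right_comm, add_sub_cancel_right]
    exact (ZMod.min_natAbs_valMinAbs_lt_iff hl (i - j)).2
  rw [filter_congr fun j _ => key j]
  refine (card_filter_val_sub (k < ·) i).trans ?_
  rw [show k - 1 = l - k - 1 by omega, ← Nat.card_Ioo]
  congr 1
  ext t
  simp only [mem_filter, mem_range, mem_Ioo]
  omega

variable [Fintype V]

lemma xSum_eq_card (hk : k ≤ l) (hc : IsComponentIndex G l v c) (i : ZMod l) :
    xSum G l v k i = #{w | (i - c w).val < k} := by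
  simp only [xSum, compV_eq_card hc, card_filter_val_sub_lt hk]

lemma ySum_eq_card (hk : k ≤ l) (hc : IsComponentIndex G l v c) (i : ZMod l) :
    ySum G l v k i = #{e ∈ (offCycle G l v).edgeFinset | (i - c e.out.1).val < k} := by
  simp only [ySum, compE_eq_card hc, card_filter_val_sub_lt hk]

lemma totE_eq_card (hc : IsComponentIndex G l v c) :
    totE G l v = #(offCycle G l v).edgeFinset := by
  rw [totE, sum_range_natCast_zmod (compE G l v), card_eq_sum_card_fiberwise (t := univ)
    (f := fun e : Sym2 V => c e.out.1) fun _ _ => mem_univ _]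
  simp only [compE_eq_card hc]

lemma szM_eq_add (hadj : ∀ i, G.Adj (v i) (v (i + 1)))
    (hinj : Function.Injective fun j : ZMod l => s(v j, v (j + 1))) (u w : V) :
    szM G u w = #{e ∈ (offCycle G l v).edgeFinset | eDist G e u < eDist G e w} +
      #{j | eDist G s(v j, v (j + 1)) u < eDist G s(v j, v (j + 1)) w} := by
  rw [szM, ← card_image_of_injective _ hinj, ← card_union_of_disjoint, ← Set.ncard_coe_finset]
  · congr 1
    ext e
    simp only [Set.mem_ofPred_eq, coe_union, coe_filter, coe_image, mem_edgeFinset,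
      mem_edgeSet_offCycle, Set.mem_union, Set.mem_image, mem_univ, true_and]
    constructor
    · rintro ⟨he, hlt⟩
      by_cases hcyc : ∃ j, e = s(v j, v (j + 1))
      · obtain ⟨j, rfl⟩ := hcyc
        exact .inr ⟨j, hlt, rfl⟩
      · exact .inl ⟨⟨he, hcyc⟩, hlt⟩
    · rintro (⟨⟨he, -⟩, hlt⟩ | ⟨j, hlt, rfl⟩)
      exacts [⟨he, hlt⟩, ⟨hadj j, hlt⟩]
  · rw [Finset.disjoint_left]
    rintro _ he hcyc
    obtain ⟨j, -, rfl⟩ := mem_image.1 hcyc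
    simp only [mem_filter, mem_edgeFinset, mem_edgeSet_offCycle] at he
    exact he.1.2 ⟨j, rfl⟩

lemma szN_eq_xSum (hl : l = 2 * k) (hadj : ∀ i, G.Adj (v i) (v (i + 1)))
    (hc : IsComponentIndex G l v c) (i : ZMod l) :
    szN G (v i) (v (i + 1)) = xSum G l v k i := by
  rw [szN, Set.ncard_setOf_eq_card_filter, xSum_eq_card (by omega) hc]
  exact congrArg card (filter_congr fun w _ =>
    (ZMod.apply_lt_apply_add_one_iff hl (dist_eq_natAbs_valMinAbs_add_dist hadj hc · w) i).1)

lemma szN_add_xSum (hl : l = 2 * k) (hadj : ∀ i, G.Adj (v i) (v (i + 1)))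
    (hc : IsComponentIndex G l v c) (i : ZMod l) :
    szN G (v (i + 1)) (v i) + xSum G l v k i = Fintype.card V := by
  rw [szN, Set.ncard_setOf_eq_card_filter, xSum_eq_card (by omega) hc, ← card_univ, add_comm,
    ← card_filter_add_card_filter_not (s := univ) (fun w => (i - c w).val < k)]
  exact congrArg (_ + ·) (congrArg card (filter_congr fun w _ =>
    (ZMod.apply_lt_apply_add_one_iff hl (dist_eq_natAbs_valMinAbs_add_dist hadj hc · w) i).2))

lemma szM_eq_ySum_add (hl : l = 2 * k) (hadj : ∀ i, G.Adj (v i) (v (i + 1)))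
    (hc : IsComponentIndex G l v c) (hinj : Function.Injective fun j : ZMod l => s(v j, v (j + 1)))
    (i : ZMod l) :
    szM G (v i) (v (i + 1)) = ySum G l v k i + (k - 1) := by
  rw [szM_eq_add hadj hinj, ySum_eq_card (by omega) hc, card_cycleEdge_closer hl hadj hc i]
  exact congrArg (· + _) (congrArg card (filter_congr fun e he =>
    (ZMod.apply_lt_apply_add_one_iff hl
      (eDist_eq_of_mem_edgeSet hadj hc (mem_edgeFinset.1 he)) i).1))

lemma szM_add_ySum (hl : l = 2 * k) (hadj : ∀ i, G.Adj (v i) (v (i + 1)))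
    (hc : IsComponentIndex G l v c) (hinj : Function.Injective fun j : ZMod l => s(v j, v (j + 1)))
    (i : ZMod l) :
    szM G (v (i + 1)) (v i) + ySum G l v k i = totE G l v + (k - 1) := by
  rw [szM_eq_add hadj hinj, ySum_eq_card (by omega) hc, card_cycleEdge_farther hl hadj hc i,
    totE_eq_card hc, add_right_comm, add_comm (#(filter _ _)),
    ← card_filter_add_card_filter_not (s := (offCycle G l v).edgeFinset)
      (fun e => (i - c e.out.1).val < k)]
  exact congrArg (_ + · + _) (congrArg card (filter_congr fun e he =>
    (ZMod.apply_lt_apply_add_one_iff hl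
      (eDist_eq_of_mem_edgeSet hadj hc (mem_edgeFinset.1 he)) i).2))

end OffCycle

theorem szNM_cycle_sum_even_general {V : Type*} [Fintype V] (G : SimpleGraph V)
    (n l k : ℕ) (hn : Fintype.card V = n) (h3 : 3 ≤ l) (hlk : l = 2 * k)
    (v : ZMod l → V)
    (hadj : ∀ i : ZMod l, G.Adj (v i) (v (i + 1)))
    (hcover : ∀ w : V, ∃ i : ZMod l, (offCycle G l v).Reachable (v i) w)
    (hsep : ∀ i j : ZMod l, (offCycle G l v).Reachable (v i) (v j) → i = j) :
    ∑ i ∈ Finset.range l,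
        (szN G (v i) (v (i + 1)) * szM G (v (i + 1)) (v i) +
          szN G (v (i + 1)) (v i) * szM G (v i) (v (i + 1)) : ℤ) =
      2 * (k : ℤ)^2 * ((n : ℤ) + totE G l v) - 2 * k * n +
        ∑ i ∈ Finset.range l,
          (((xSum G l v k i : ℤ) - k) * ((totE G l v : ℤ) - ySum G l v k i) +
            (ySum G l v k i : ℤ) * ((n : ℤ) - xSum G l v k i - k)) := by
  have : NeZero l := ⟨by omega⟩
  choose c hreach using hcover
  have hc : IsComponentIndex G l v c :=
    fun j w => ⟨fun h => hsep _ _ ((hreach w).trans h.symm), fun h => h ▸ hreach w⟩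
  have hinj := cycleEdge_injective h3 (Function.LeftInverse.injective hc.apply_self)
  have hterm : ∀ i : ZMod l,
      (szN G (v i) (v (i + 1)) * szM G (v (i + 1)) (v i) +
        szN G (v (i + 1)) (v i) * szM G (v i) (v (i + 1)) : ℤ) =
      ((xSum G l v k i : ℤ) - k) * ((totE G l v : ℤ) - ySum G l v k i) +
        (ySum G l v k i : ℤ) * ((n : ℤ) - xSum G l v k i - k) +
        (((k : ℤ) - 1) * n + k * totE G l v) := by
    intro i
    have h₁ := szN_eq_xSum hlk hadj hc i
    have h₂ := szN_add_xSum hlk hadj hc i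
    have h₃ := szM_eq_ySum_add hlk hadj hc hinj i
    have h₄ := szM_add_ySum hlk hadj hc hinj i
    zify [show 1 ≤ k by omega] at h₁ h₂ h₃ h₄
    rw [h₁, eq_sub_of_add_eq h₂, h₃, eq_sub_of_add_eq h₄, hn]
    ring
  rw [sum_congr rfl fun (i : ℕ) _ => hterm i, sum_add_distrib, sum_const, card_range,
    nsmul_eq_mul, show (l : ℤ) = 2 * k by exact_mod_cast hlk]
  ring

/-- Let `G` be a connected graph of order `n` containing a cycle
`C_l = v₀v₁⋯v_{l-1}v₀` of even length `l = 2k` such that `G - E(C_l)` has exactly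
`l` components `G₀,…,G_{l-1}` with `vᵢ ∈ Gᵢ`.  With `nᵢ = |V(Gᵢ)|`,
`mᵢ = |E(Gᵢ)|`, `m = Σ mᵢ`, `xᵢ = nᵢ + ⋯ + n_{i-k+1}`, `yᵢ = mᵢ + ⋯ + m_{i-k+1}`
and `eᵢ = vᵢv_{i+1}`, one has
`Σᵢ [n_{vᵢ}(eᵢ|G)·m_{v_{i+1}}(eᵢ|G) + n_{v_{i+1}}(eᵢ|G)·m_{vᵢ}(eᵢ|G)]`
`= 2k²(n+m) - 2kn + Σᵢ [(xᵢ-k)(m-yᵢ) + yᵢ(n-xᵢ-k)]`. -/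
theorem szNM_cycle_sum_even {V : Type*} [Fintype V] (G : SimpleGraph V)
    (n l k : ℕ) (hn : Fintype.card V = n) (h3 : 3 ≤ l) (hlk : l = 2 * k)
    (v : ZMod l → V)
    (hinj : Function.Injective v) (hconn : G.Connected)
    (hadj : ∀ i : ZMod l, G.Adj (v i) (v (i + 1)))
    (hcover : ∀ w : V, ∃ i : ZMod l, (offCycle G l v).Reachable (v i) w)
    (hsep : ∀ i j : ZMod l, (offCycle G l v).Reachable (v i) (v j) → i = j) :
    ∑ i ∈ Finset.range l,
        (szN G (v i) (v (i + 1)) * szM G (v (i + 1)) (v i) +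
          szN G (v (i + 1)) (v i) * szM G (v i) (v (i + 1)) : ℤ) =
      2 * (k : ℤ)^2 * ((n : ℤ) + totE G l v) - 2 * k * n +
        ∑ i ∈ Finset.range l,
          (((xSum G l v k i : ℤ) - k) * ((totE G l v : ℤ) - ySum G l v k i) +
            (ySum G l v k i : ℤ) * ((n : ℤ) - xSum G l v k i - k)) :=
  szNM_cycle_sum_even_general G n l k hn h3 hlk v hadj hcover hsep
end
end

section
/- Let G be a connected graph with a cut edge u₁u₂ such that both endpoints have degree at least 2 in G, with G₁ and G₂ the components of G − u₁u₂ containing u₁ and u₂ respectively. Let G' be the graph obtained from G by contracting the edge u₁u₂ and attaching a pendant edge at the contracted vertex (equivalently, G' is obtained from G₁ and G₂ by identifying u₁ with u₂ and attaching one pendant vertex to the identified vertex). Then Sz_e(G') < Sz_e(G) and Sz_ev(G') < Sz_ev(G). -/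
open SimpleGraph Finset
open scoped Classical

noncomputable section

variable {V : Type*}

/-- the graph with a cut edge `u₁u₂` whose two components after deleting the cut
edge are `G₁` (containing `u₁`) and `G₂` (containing `u₂`) -/
def bridgeGraph {V₁ V₂ : Type*} (G₁ : SimpleGraph V₁) (G₂ : SimpleGraph V₂)
    (u₁ : V₁) (u₂ : V₂) : SimpleGraph (V₁ ⊕ V₂) where
  Adj a b :=
    match a, b with
    | Sum.inl x, Sum.inl y => G₁.Adj x y
    | Sum.inl x, Sum.inr y => x = u₁ ∧ y = u₂
    | Sum.inr x, Sum.inl y => x = u₂ ∧ y = u₁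
    | Sum.inr x, Sum.inr y => G₂.Adj x y
  symm := by
    constructor
    rintro (x | x) (y | y) h
    · exact h.symm
    · exact ⟨h.2, h.1⟩
    · exact ⟨h.2, h.1⟩
    · exact h.symm
  loopless := by
    constructor
    rintro (x | x) h
    · exact G₁.irrefl h
    · exact G₂.irrefl h

/-- the graph obtained from `bridgeGraph G₁ G₂ u₁ u₂` by contracting the cut edge
`u₁u₂` (identifying `u₂` with `u₁`, here represented by `Sum.inl u₁`) and
attaching a pendant edge (to the pendant vertex `Sum.inr u₂`) at the contracted
vertex -/
def contractBridge {V₁ V₂ : Type*} (G₁ : SimpleGraph V₁) (G₂ : SimpleGraph V₂)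
    (u₁ : V₁) (u₂ : V₂) : SimpleGraph (V₁ ⊕ V₂) where
  Adj a b :=
    match a, b with
    | Sum.inl x, Sum.inl y => G₁.Adj x y
    | Sum.inl x, Sum.inr y => x = u₁ ∧ (y = u₂ ∨ G₂.Adj u₂ y)
    | Sum.inr x, Sum.inl y => y = u₁ ∧ (x = u₂ ∨ G₂.Adj u₂ x)
    | Sum.inr x, Sum.inr y => x ≠ u₂ ∧ y ≠ u₂ ∧ G₂.Adj x y
  symm := by
    constructor
    rintro (x | x) (y | y) h
    · exact h.symm
    · exact h
    · exact h
    · exact ⟨h.2.1, h.1, h.2.2.symm⟩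
  loopless := by
    constructor
    rintro (x | x) h
    · exact G₁.irrefl h
    · exact G₂.irrefl h.2.2


/-!
Both `G = bridgeGraph G₁ G₂ u₁ u₂` and `G' = contractBridge G₁ G₂ u₁ u₂` embed isometrically into
`(G₁ □ G₂) □ K₂`: a vertex is sent to its image in the wedge of `G₁` and `G₂` at `u₁ = u₂`,
together with a layer bit (in `G`: the side of the cut edge; in `G'`: being the pendant vertex).
Every edge then either stays in one layer or joins two copies of the same vertex, so for two
vertices in the same layer all comparisons `d(u, w) < d(v, w)`, and all comparisons of distances
to edges, are decided in `G₁ □ G₂`, where `G` and `G'` look alike. Hence every edge other than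
`u₁u₂` contributes equally to the Szeged indices of `G` and `G'`. With `nᵢ = |V(Gᵢ)| ≥ 2` and
`mᵢ = |E(Gᵢ)| ≥ 1`, the cut edge contributes `m₁ m₂` and `n₁ m₂ + n₂ m₁` to `G`, the pendant edge
only `0` and `m₁ + m₂` to `G'`.
-/

namespace SimpleGraph

variable {V W : Type*} {G : SimpleGraph V} {H : SimpleGraph W}

lemma Reachable.dist_map_le (f : G →g H) {u v : V} (h : G.Reachable u v) :
    H.dist (f u) (f v) ≤ G.dist u v := by
  obtain ⟨p, hp⟩ := h.exists_walk_length_eq_dist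
  simpa [hp] using dist_le (p.map f)

lemma Connected.dist_boxProd (hG : G.Connected) (hH : H.Connected) (x y : V × W) :
    (G □ H).dist x y = G.dist x.1 y.1 + H.dist x.2 y.2 := by
  have := edist_boxProd (G := G) (H := H) x y
  rw [← (hG.preconnected _ _).coe_dist_eq_edist, ← (hH.preconnected _ _).coe_dist_eq_edist,
    ← ((hG.boxProd hH).preconnected _ _).coe_dist_eq_edist] at this
  exact_mod_cast this

lemma exists_adj_ne_of_two_le_degree {v : V} [Fintype (G.neighborSet v)] (h : 2 ≤ G.degree v)
    (w : V) : ∃ x, G.Adj v x ∧ x ≠ w := by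
  obtain ⟨x, hx, hxw⟩ := Finset.exists_mem_ne (s := G.neighborFinset v) (by simpa) w
  exact ⟨x, (mem_neighborFinset _ _ _).mp hx, hxw⟩

lemma sum_edgeFinset_map_sup_map_sup_edge {V₁ V₂ M : Type*} [Fintype V₁] [Fintype V₂]
    [Fintype W] [AddCommMonoid M] {G₁ : SimpleGraph V₁} {G₂ : SimpleGraph V₂} {i : V₁ ↪ W}
    {j : V₂ ↪ W} {s t : W} (hH : H = G₁.map i ⊔ G₂.map j ⊔ edge s t)
    (hij : Disjoint (G₁.map i) (G₂.map j)) (hst : ¬(G₁.map i ⊔ G₂.map j).Adj s t) (hne : s ≠ t)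
    (f : Sym2 W → M) :
    ∑ e ∈ H.edgeFinset, f e =
      ∑ e ∈ G₁.edgeFinset, f (e.map i) + ∑ e ∈ G₂.edgeFinset, f (e.map j) + f s(s, t) := by
  have hdisj : Disjoint (G₁.edgeFinset.map i.sym2Map) (G₂.edgeFinset.map j.sym2Map) := by
    rw [← Finset.disjoint_coe]
    simpa [edgeSet_map] using disjoint_edgeSet.mpr hij
  have hmem : s(s, t) ∉ G₁.edgeFinset.map i.sym2Map ∪ G₂.edgeFinset.map j.sym2Map := by
    rw [← Finset.mem_coe]
    have : s(s, t) ∉ (G₁.map i ⊔ G₂.map j).edgeSet := hst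
    simpa [edgeSet_map] using this
  have hE : H.edgeFinset =
      insert s(s, t) (G₁.edgeFinset.map i.sym2Map ∪ G₂.edgeFinset.map j.sym2Map) := by
    rw [← Finset.coe_inj]
    simp [hH, edgeSet_map, edgeSet_edge_of_ne hne, Set.union_singleton]
  rw [hE, Finset.sum_insert hmem, Finset.sum_union hdisj, Finset.sum_map, Finset.sum_map, add_comm]
  rfl

end SimpleGraph

lemma Sym2.exists_mem {α : Type*} (z : Sym2 α) : ∃ a, a ∈ z :=
  z.ind fun a _ => ⟨a, Sym2.mem_mk_left a _⟩

open SimpleGraph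

section EdgeWeights

variable {V : Type*} (G : SimpleGraph V)

lemma eDist_mk (a b w : V) : eDist G s(a, b) w = min (G.dist a w) (G.dist b w) :=
  Sym2.lift_mk _ _ _

lemma szM_eq_sum [Fintype V] (c d : V) :
    szM G c d = ∑ e ∈ G.edgeFinset, if eDist G e c < eDist G e d then 1 else 0 := by
  rw [szM, Set.ncard_eq_toFinset_card', Finset.sum_boole, Nat.cast_id]
  congr 1
  ext e
  simp

def edgeSzegedWeight : Sym2 V → ℕ :=
  Sym2.lift ⟨fun u v => szM G u v * szM G v u, fun _ _ => mul_comm _ _⟩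

def edgeVertexSzegedWeight : Sym2 V → ℕ :=
  Sym2.lift ⟨fun u v => szN G u v * szM G v u + szN G v u * szM G u v, fun _ _ => add_comm _ _⟩

lemma edgeSzegedWeight_mk (u v : V) : edgeSzegedWeight G s(u, v) = szM G u v * szM G v u :=
  Sym2.lift_mk _ _ _

lemma edgeVertexSzegedWeight_mk (u v : V) :
    edgeVertexSzegedWeight G s(u, v) = szN G u v * szM G v u + szN G v u * szM G u v :=
  Sym2.lift_mk _ _ _

lemma szE_eq_sum [Fintype V] : szE G = ∑ e ∈ G.edgeFinset, edgeSzegedWeight G e := rfl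

lemma szEV_eq_sum [Fintype V] :
    szEV G = 1 / 2 * ∑ e ∈ G.edgeFinset, (edgeVertexSzegedWeight G e : ℚ) := by
  rw [szEV]
  congr 1
  refine Finset.sum_congr rfl fun e _ => ?_
  induction e using Sym2.ind with
  | _ u v => rw [Sym2.lift_mk, edgeVertexSzegedWeight_mk]

end EdgeWeights

namespace SimpleGraph

/-- `H` is isometric, via `v ↦ (π v, ℓ v)`, to its image in the box product of `K` with `K₂`. -/
def IsIsometricLayering {V W : Type*} (H : SimpleGraph V) (K : SimpleGraph W) (π : V → W)
    (ℓ : V → Bool) : Prop :=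
  ∀ a b, H.dist a b = K.dist (π a) (π b) + if ℓ a = ℓ b then 0 else 1

namespace IsIsometricLayering

variable {V W : Type*} {G : SimpleGraph V} {K : SimpleGraph W} {π : V → W} {ℓ : V → Bool}

lemma of_dist_le (hG : G.Connected) (hK : K.Connected)
    (hadj : ∀ a b, G.Adj a b → K.Adj (π a) (π b) ∧ ℓ a = ℓ b ∨ ℓ a ≠ ℓ b ∧ π a = π b)
    (hle : ∀ a b, G.dist a b ≤ K.dist (π a) (π b) + if ℓ a = ℓ b then 0 else 1) :
    G.IsIsometricLayering K π ℓ := by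
  let f : G →g K □ (⊤ : SimpleGraph Bool) :=
    ⟨fun v => (π v, ℓ v), fun h => by simpa [boxProd_adj] using hadj _ _ h⟩
  refine fun a b => (hle a b).antisymm ?_
  have := (hG.preconnected a b).dist_map_le f
  rwa [hK.dist_boxProd connected_top, dist_top] at this

variable (hG : G.IsIsometricLayering K π ℓ)
include hG

lemma dist_lt_dist_iff_of_layer_eq {c d : V} (hcd : ℓ c = ℓ d) (w : V) :
    G.dist c w < G.dist d w ↔ K.dist (π c) (π w) < K.dist (π d) (π w) := by
  rw [hG, hG, hcd]
  omega

lemma dist_lt_dist_iff_of_proj_eq {c d : V} (hπ : π c = π d) (hℓ : ℓ c ≠ ℓ d) (w : V) :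
    G.dist c w < G.dist d w ↔ ℓ w = ℓ c := by
  rw [hG, hG, hπ]
  cases hc : ℓ c <;> cases hd : ℓ d <;> cases hw : ℓ w <;> simp_all

lemma layer_eq_or_proj_eq_of_adj (hK : K.Connected) {a b : V} (hab : G.Adj a b) :
    ℓ a = ℓ b ∨ π a = π b := by
  have h := hG a b
  rw [dist_eq_one_iff_adj.mpr hab] at h
  by_cases hℓ : ℓ a = ℓ b
  · exact .inl hℓ
  · refine .inr (hK.dist_eq_zero_iff.mp ?_)
    simp only [hℓ, if_false] at h
    omega

lemma eDist_lt_eDist_iff_of_layer_eq (hK : K.Connected) {e : Sym2 V} (he : e ∈ G.edgeSet)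
    {c d : V} (hcd : ℓ c = ℓ d) :
    eDist G e c < eDist G e d ↔ eDist K (e.map π) (π c) < eDist K (e.map π) (π d) := by
  induction e using Sym2.ind with
  | _ a b =>
  simp only [Sym2.map_mk, eDist_mk, hG _ c, hG _ d, hcd]
  rcases hG.layer_eq_or_proj_eq_of_adj (a := a) (b := b) hK he with h | h
  · rw [h]
    omega
  · rw [h]
    cases ha : ℓ a <;> cases hb : ℓ b <;> cases hd : ℓ d <;> simp_all

lemma eDist_lt_eDist_iff_of_proj_eq (hK : K.Connected) {e : Sym2 V} (he : e ∈ G.edgeSet)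
    {c d : V} (hπ : π c = π d) (hℓ : ℓ c ≠ ℓ d) :
    eDist G e c < eDist G e d ↔ ∀ v ∈ e, ℓ v = ℓ c := by
  induction e using Sym2.ind with
  | _ a b =>
  simp only [eDist_mk, hG _ c, hG _ d, hπ, Sym2.mem_iff, forall_eq_or_imp, forall_eq]
  rcases hG.layer_eq_or_proj_eq_of_adj (a := a) (b := b) hK he with h | h
  · rw [h]
    cases hb : ℓ b <;> cases hc : ℓ c <;> cases hd : ℓ d <;> simp_all <;> omega
  · rw [h]
    cases ha : ℓ a <;> cases hb : ℓ b <;> cases hc : ℓ c <;> cases hd : ℓ d <;> simp_all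

lemma szN_eq_of_layer_eq {c d : V} (hcd : ℓ c = ℓ d) :
    szN G c d = {w | K.dist (π c) (π w) < K.dist (π d) (π w)}.ncard := by
  simp only [szN, hG.dist_lt_dist_iff_of_layer_eq hcd]

lemma szN_eq_of_proj_eq {c d : V} (hπ : π c = π d) (hℓ : ℓ c ≠ ℓ d) :
    szN G c d = {w | ℓ w = ℓ c}.ncard := by
  simp only [szN, hG.dist_lt_dist_iff_of_proj_eq hπ hℓ]

variable [Fintype V]

lemma szM_eq_of_layer_eq (hK : K.Connected) {c d : V} (hcd : ℓ c = ℓ d) :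
    szM G c d = ∑ e ∈ G.edgeFinset,
      if eDist K (e.map π) (π c) < eDist K (e.map π) (π d) then 1 else 0 := by
  rw [szM_eq_sum]
  refine Finset.sum_congr rfl fun e he => ?_
  exact if_congr (hG.eDist_lt_eDist_iff_of_layer_eq hK (mem_edgeFinset.mp he) hcd) rfl rfl

lemma szM_eq_of_proj_eq (hK : K.Connected) {c d : V} (hπ : π c = π d) (hℓ : ℓ c ≠ ℓ d) :
    szM G c d = ∑ e ∈ G.edgeFinset, if ∀ v ∈ e, ℓ v = ℓ c then 1 else 0 := by
  rw [szM_eq_sum]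
  refine Finset.sum_congr rfl fun e he => ?_
  exact if_congr (hG.eDist_lt_eDist_iff_of_proj_eq hK (mem_edgeFinset.mp he) hπ hℓ) rfl rfl

end IsIsometricLayering

end SimpleGraph

namespace ContractBridge

variable {V₁ V₂ : Type*} {G₁ : SimpleGraph V₁} {G₂ : SimpleGraph V₂} (u₁ : V₁) (u₂ : V₂)

/-- Contracting the cut edge of `bridgeGraph` maps it onto the wedge of `G₁` and `G₂` at
`u₁ = u₂`, which sits in `G₁ □ G₂` as `(V₁ × {u₂}) ∪ ({u₁} × V₂)`. -/
def toWedge : V₁ ⊕ V₂ → V₁ × V₂ := Sum.elim (·, u₂) (u₁, ·)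

def contractInr (a : V₂) : V₁ ⊕ V₂ := if a = u₂ then .inl u₁ else .inr a

def contractVert : V₁ ⊕ V₂ → V₁ ⊕ V₂ := Sum.elim .inl (contractInr u₁ u₂)

def isPendant (v : V₁ ⊕ V₂) : Bool := v = .inr u₂

@[simp] lemma toWedge_inl (x : V₁) : toWedge u₁ u₂ (.inl x) = (x, u₂) := rfl

@[simp] lemma toWedge_inr (a : V₂) : toWedge u₁ u₂ (.inr a) = (u₁, a) := rfl

@[simp] lemma isPendant_inl (x : V₁) : isPendant u₂ (.inl x) = false := rfl

@[simp] lemma isPendant_inr_self : isPendant (V₁ := V₁) u₂ (.inr u₂) = true := by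
  simp [isPendant]

@[simp] lemma contractVert_inl (x : V₁) : contractVert u₁ u₂ (.inl x) = .inl x := rfl

@[simp] lemma contractVert_inr (a : V₂) : contractVert u₁ u₂ (.inr a) = contractInr u₁ u₂ a :=
  rfl

@[simp] lemma contractInr_self : contractInr u₁ u₂ u₂ = .inl u₁ := if_pos rfl

@[simp] lemma toWedge_contractInr (a : V₂) : toWedge u₁ u₂ (contractInr u₁ u₂ a) = (u₁, a) := by
  unfold contractInr
  split_ifs with h <;> simp [h]

@[simp] lemma isPendant_contractInr (a : V₂) : isPendant u₂ (contractInr u₁ u₂ a) = false := by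
  unfold contractInr
  split_ifs with h <;> simp [isPendant, h]

@[simp] lemma toWedge_contractVert (v : V₁ ⊕ V₂) :
    toWedge u₁ u₂ (contractVert u₁ u₂ v) = toWedge u₁ u₂ v := by
  cases v <;> simp

@[simp] lemma isPendant_contractVert (v : V₁ ⊕ V₂) :
    isPendant u₂ (contractVert u₁ u₂ v) = false := by
  cases v <;> simp

lemma contractVert_of_ne {v : V₁ ⊕ V₂} (hv : v ≠ .inr u₂) : contractVert u₁ u₂ v = v := by
  rcases v with x | a
  · rfl
  · exact if_neg fun h => hv (by rw [h])

def contractInrEmb : V₂ ↪ V₁ ⊕ V₂ where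
  toFun := contractInr u₁ u₂
  inj' a b h := by
    unfold contractInr at h
    split_ifs at h with ha hb hb <;> simp_all

@[simp] lemma contractInrEmb_apply (a : V₂) : contractInrEmb u₁ u₂ a = contractInr u₁ u₂ a := rfl

def contractInrHom : G₂ →g contractBridge G₁ G₂ u₁ u₂ where
  toFun := contractInr u₁ u₂
  map_rel' {a b} h := by
    unfold contractInr
    split_ifs with ha hb hb
    · exact absurd (ha.trans hb.symm) h.ne
    · exact ⟨rfl, .inr (ha ▸ h)⟩
    · exact ⟨rfl, .inr (hb ▸ h.symm)⟩
    · exact ⟨ha, hb, h⟩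

@[simp] lemma contractInrHom_apply (a : V₂) :
    contractInrHom (G₁ := G₁) (G₂ := G₂) u₁ u₂ a = contractInr u₁ u₂ a := rfl

lemma contractBridge_adj_pendant : (contractBridge G₁ G₂ u₁ u₂).Adj (.inl u₁) (.inr u₂) :=
  ⟨rfl, .inl rfl⟩

lemma bridgeGraph_adj_toWedge {a b : V₁ ⊕ V₂} (h : (bridgeGraph G₁ G₂ u₁ u₂).Adj a b) :
    (G₁ □ G₂).Adj (toWedge u₁ u₂ a) (toWedge u₁ u₂ b) ∧ a.isRight = b.isRight ∨
      a.isRight ≠ b.isRight ∧ toWedge u₁ u₂ a = toWedge u₁ u₂ b := by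
  rcases a with x | a <;> rcases b with y | b <;> simp_all [bridgeGraph, boxProd_adj]

lemma contractBridge_adj_toWedge {a b : V₁ ⊕ V₂} (h : (contractBridge G₁ G₂ u₁ u₂).Adj a b) :
    (G₁ □ G₂).Adj (toWedge u₁ u₂ a) (toWedge u₁ u₂ b) ∧ isPendant u₂ a = isPendant u₂ b ∨
      isPendant u₂ a ≠ isPendant u₂ b ∧ toWedge u₁ u₂ a = toWedge u₁ u₂ b := by
  rcases a with x | a <;> rcases b with y | b <;>
    simp_all [contractBridge, boxProd_adj, isPendant]
  all_goals grind [Adj.ne, Adj.symm]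

variable (G₁ G₂)

lemma bridgeGraph_eq_sum_sup_edge :
    bridgeGraph G₁ G₂ u₁ u₂ = (G₁ ⊕g G₂) ⊔ edge (Sum.inl u₁) (Sum.inr u₂) := by
  ext (x | a) (y | b) <;> simp [bridgeGraph, edge_adj, eq_comm]

lemma bridgeGraph_eq_map_sup_map_sup_edge :
    bridgeGraph G₁ G₂ u₁ u₂ = G₁.map Function.Embedding.inl ⊔ G₂.map Function.Embedding.inr ⊔
      edge (Sum.inl u₁) (Sum.inr u₂) := by
  ext (x | a) (y | b) <;> simp [bridgeGraph, edge_adj, eq_comm]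

lemma contractBridge_eq_map_sup_map_sup_edge :
    contractBridge G₁ G₂ u₁ u₂ = G₁.map Function.Embedding.inl ⊔
      G₂.map (contractInrEmb u₁ u₂) ⊔ edge (Sum.inl u₁) (Sum.inr u₂) := by
  ext (x | a) (y | b) <;> simp [contractBridge, edge_adj, contractInr]
  all_goals grind [Adj.ne, Adj.symm]

section Distances

variable {G₁ G₂} {u₁ u₂} (h₁ : G₁.Connected) (h₂ : G₂.Connected)
include h₁ h₂

lemma bridgeGraph_connected : (bridgeGraph G₁ G₂ u₁ u₂).Connected := by
  rw [bridgeGraph_eq_sum_sup_edge]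
  exact h₁.sum_sup_edge h₂

lemma contractBridge_connected : (contractBridge G₁ G₂ u₁ u₂).Connected := by
  refine (connected_iff_exists_forall_reachable _).2 ⟨.inl u₁, ?_⟩
  rintro (x | a)
  · exact (h₁.preconnected u₁ x).map (G' := contractBridge G₁ G₂ u₁ u₂) ⟨Sum.inl, id⟩
  · by_cases ha : a = u₂
    · subst ha
      exact (contractBridge_adj_pendant u₁ a).reachable
    · simpa [contractInr, ha] using (h₂.preconnected u₂ a).map (contractInrHom (G₁ := G₁) u₁ u₂)

lemma isIsometricLayering_bridgeGraph :
    (bridgeGraph G₁ G₂ u₁ u₂).IsIsometricLayering (G₁ □ G₂) (toWedge u₁ u₂) Sum.isRight := by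
  set B := bridgeGraph G₁ G₂ u₁ u₂
  have hB : B.Connected := bridgeGraph_connected h₁ h₂
  have d₁ (x y : V₁) : B.dist (.inl x) (.inl y) ≤ G₁.dist x y :=
    (h₁.preconnected x y).dist_map_le (G := G₁) (H := B) ⟨Sum.inl, id⟩
  have d₂ (a b : V₂) : B.dist (.inr a) (.inr b) ≤ G₂.dist a b :=
    (h₂.preconnected a b).dist_map_le (G := G₂) (H := B) ⟨Sum.inr, id⟩
  have cross (x : V₁) (b : V₂) : B.dist (.inl x) (.inr b) ≤ G₁.dist x u₁ + G₂.dist u₂ b + 1 := by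
    have : B.dist (.inl u₁) (.inr u₂) = 1 := dist_eq_one_iff_adj.mpr ⟨rfl, rfl⟩
    have := hB.dist_triangle (u := .inl x) (v := .inl u₁) (w := .inr b)
    have := hB.dist_triangle (u := .inl u₁) (v := .inr u₂) (w := .inr b)
    have := d₁ x u₁
    have := d₂ u₂ b
    omega
  refine .of_dist_le hB (h₁.boxProd h₂) (fun _ _ => bridgeGraph_adj_toWedge u₁ u₂) fun a b => ?_
  rw [h₁.dist_boxProd h₂]
  rcases a with x | a <;> rcases b with y | b
  · simpa using d₁ x y
  · simpa using cross x b
  · rw [SimpleGraph.dist_comm]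
    simpa [SimpleGraph.dist_comm] using cross y a
  · simpa using d₂ a b

lemma dist_contractVert_le (c d : V₁ ⊕ V₂) :
    (contractBridge G₁ G₂ u₁ u₂).dist (contractVert u₁ u₂ c) (contractVert u₁ u₂ d) ≤
      (G₁ □ G₂).dist (toWedge u₁ u₂ c) (toWedge u₁ u₂ d) := by
  set C := contractBridge G₁ G₂ u₁ u₂
  have hC : C.Connected := contractBridge_connected h₁ h₂
  have d₁ (x y : V₁) : C.dist (.inl x) (.inl y) ≤ G₁.dist x y :=
    (h₁.preconnected x y).dist_map_le (G := G₁) (H := C) ⟨Sum.inl, id⟩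
  have d₂ (a b : V₂) : C.dist (contractInr u₁ u₂ a) (contractInr u₁ u₂ b) ≤ G₂.dist a b :=
    (h₂.preconnected a b).dist_map_le (contractInrHom (G₁ := G₁) u₁ u₂)
  have cross (x : V₁) (b : V₂) :
      C.dist (.inl x) (contractInr u₁ u₂ b) ≤ G₁.dist x u₁ + G₂.dist u₂ b := by
    have := hC.dist_triangle (u := .inl x) (v := .inl u₁) (w := contractInr u₁ u₂ b)
    have := d₁ x u₁
    have := d₂ u₂ b
    simp only [contractInr_self] at this
    omega
  rw [h₁.dist_boxProd h₂]
  rcases c with x | a <;> rcases d with y | b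
  · simpa using d₁ x y
  · simpa using cross x b
  · rw [SimpleGraph.dist_comm]
    simpa [SimpleGraph.dist_comm] using cross y a
  · simpa using d₂ a b

lemma isIsometricLayering_contractBridge :
    (contractBridge G₁ G₂ u₁ u₂).IsIsometricLayering (G₁ □ G₂) (toWedge u₁ u₂)
      (isPendant u₂) := by
  set C := contractBridge G₁ G₂ u₁ u₂
  have hC : C.Connected := contractBridge_connected h₁ h₂
  have pendant (v : V₁ ⊕ V₂) (hv : v ≠ .inr u₂) :
      C.dist (.inr u₂) v ≤ (G₁ □ G₂).dist (toWedge u₁ u₂ (.inr u₂)) (toWedge u₁ u₂ v) + 1 := by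
    have := hC.dist_triangle (u := .inr u₂) (v := .inl u₁) (w := v)
    have : C.dist (.inr u₂) (.inl u₁) = 1 :=
      dist_eq_one_iff_adj.mpr (contractBridge_adj_pendant u₁ u₂).symm
    have : C.dist (contractVert u₁ u₂ (.inl u₁)) (contractVert u₁ u₂ v) ≤ _ :=
      dist_contractVert_le h₁ h₂ _ _
    rw [contractVert_inl, contractVert_of_ne u₁ u₂ hv] at this
    simp only [toWedge_inl, toWedge_inr] at *
    omega
  refine .of_dist_le hC (h₁.boxProd h₂) (fun _ _ => contractBridge_adj_toWedge u₁ u₂)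
    fun a b => ?_
  by_cases ha : a = .inr u₂ <;> by_cases hb : b = .inr u₂
  · simp [ha, hb]
  · simpa [ha, hb, isPendant] using pendant b hb
  · rw [SimpleGraph.dist_comm, SimpleGraph.dist_comm (G := G₁ □ G₂)]
    simpa [ha, hb, isPendant] using pendant a ha
  · simpa [ha, hb, isPendant, contractVert_of_ne] using
      dist_contractVert_le (u₁ := u₁) (u₂ := u₂) h₁ h₂ a b

lemma szN_bridgeGraph_eq {c d : V₁ ⊕ V₂} (hcd : c.isRight = d.isRight) :
    szN (bridgeGraph G₁ G₂ u₁ u₂) c d =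
      szN (contractBridge G₁ G₂ u₁ u₂) (contractVert u₁ u₂ c) (contractVert u₁ u₂ d) := by
  rw [(isIsometricLayering_bridgeGraph h₁ h₂).szN_eq_of_layer_eq hcd,
    (isIsometricLayering_contractBridge h₁ h₂).szN_eq_of_layer_eq (by simp)]
  simp

lemma szN_bridgeGraph_inl_inr [Fintype V₁] :
    szN (bridgeGraph G₁ G₂ u₁ u₂) (.inl u₁) (.inr u₂) = Fintype.card V₁ := by
  rw [(isIsometricLayering_bridgeGraph h₁ h₂).szN_eq_of_proj_eq (c := .inl u₁) (d := .inr u₂)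
    rfl (by simp)]
  simp [← Set.range_inl, Set.ncard_range_of_injective Sum.inl_injective]

lemma szN_bridgeGraph_inr_inl [Fintype V₂] :
    szN (bridgeGraph G₁ G₂ u₁ u₂) (.inr u₂) (.inl u₁) = Fintype.card V₂ := by
  rw [(isIsometricLayering_bridgeGraph h₁ h₂).szN_eq_of_proj_eq (c := .inr u₂) (d := .inl u₁)
    rfl (by simp)]
  simp [← Set.range_inr, Set.ncard_range_of_injective Sum.inr_injective]

lemma szN_contractBridge_pendant_inl :
    szN (contractBridge G₁ G₂ u₁ u₂) (.inr u₂) (.inl u₁) = 1 := by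
  rw [(isIsometricLayering_contractBridge h₁ h₂).szN_eq_of_proj_eq (c := .inr u₂)
    (d := .inl u₁) rfl (by simp)]
  simp [isPendant]

end Distances

section Szeged

variable [Fintype V₁] [Fintype V₂] {G₁ G₂}

lemma sum_edgeFinset_bridgeGraph {M : Type*} [AddCommMonoid M] (f : Sym2 (V₁ ⊕ V₂) → M) :
    ∑ e ∈ (bridgeGraph G₁ G₂ u₁ u₂).edgeFinset, f e = ∑ e ∈ G₁.edgeFinset, f (e.map .inl) +
      ∑ e ∈ G₂.edgeFinset, f (e.map .inr) + f s(.inl u₁, .inr u₂) :=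
  sum_edgeFinset_map_sup_map_sup_edge (bridgeGraph_eq_map_sup_map_sup_edge G₁ G₂ u₁ u₂)
    (by simp [SimpleGraph.disjoint_left]) (by simp) Sum.inl_ne_inr f

lemma sum_edgeFinset_contractBridge {M : Type*} [AddCommMonoid M] (f : Sym2 (V₁ ⊕ V₂) → M) :
    ∑ e ∈ (contractBridge G₁ G₂ u₁ u₂).edgeFinset, f e = ∑ e ∈ G₁.edgeFinset, f (e.map .inl) +
      ∑ e ∈ G₂.edgeFinset, f (e.map (contractInr u₁ u₂)) + f s(.inl u₁, .inr u₂) :=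
  sum_edgeFinset_map_sup_map_sup_edge (contractBridge_eq_map_sup_map_sup_edge G₁ G₂ u₁ u₂)
    (by simp [SimpleGraph.disjoint_left, contractInr]; grind [Adj.ne])
    (by simp [contractInr]; grind) Sum.inl_ne_inr f

lemma sum_edgeFinset_bridgeGraph_add_eq {M : Type*} [AddCommMonoid M] (f g : Sym2 (V₁ ⊕ V₂) → M)
    (hinl : ∀ e : Sym2 V₁, f (e.map .inl) = g (e.map .inl))
    (hinr : ∀ e : Sym2 V₂, f (e.map .inr) = g (e.map (contractInr u₁ u₂))) :
    ∑ e ∈ (bridgeGraph G₁ G₂ u₁ u₂).edgeFinset, f e + g s(.inl u₁, .inr u₂) =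
      ∑ e ∈ (contractBridge G₁ G₂ u₁ u₂).edgeFinset, g e + f s(.inl u₁, .inr u₂) := by
  rw [sum_edgeFinset_bridgeGraph, sum_edgeFinset_contractBridge]
  simp only [hinl, hinr]
  abel

variable {u₁ u₂}

lemma exists_adj_of_two_le_degree_inl (hd : 2 ≤ (bridgeGraph G₁ G₂ u₁ u₂).degree (.inl u₁)) :
    ∃ x, G₁.Adj u₁ x := by
  obtain ⟨x | b, hx, hne⟩ := exists_adj_ne_of_two_le_degree hd (.inr u₂)
  · exact ⟨x, hx⟩
  · exact absurd (congrArg Sum.inr hx.2) hne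

lemma exists_adj_of_two_le_degree_inr (hd : 2 ≤ (bridgeGraph G₁ G₂ u₁ u₂).degree (.inr u₂)) :
    ∃ y, G₂.Adj u₂ y := by
  obtain ⟨x | b, hx, hne⟩ := exists_adj_ne_of_two_le_degree hd (.inl u₁)
  · exact absurd (congrArg Sum.inl hx.2) hne
  · exact ⟨b, hx⟩

variable (h₁ : G₁.Connected) (h₂ : G₂.Connected)
include h₁ h₂

lemma szM_bridgeGraph_eq {c d : V₁ ⊕ V₂} (hcd : c.isRight = d.isRight) :
    szM (bridgeGraph G₁ G₂ u₁ u₂) c d =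
      szM (contractBridge G₁ G₂ u₁ u₂) (contractVert u₁ u₂ c) (contractVert u₁ u₂ d) := by
  rw [(isIsometricLayering_bridgeGraph h₁ h₂).szM_eq_of_layer_eq (h₁.boxProd h₂) hcd,
    (isIsometricLayering_contractBridge h₁ h₂).szM_eq_of_layer_eq (h₁.boxProd h₂) (by simp),
    toWedge_contractVert, toWedge_contractVert]
  refine add_right_cancel (sum_edgeFinset_bridgeGraph_add_eq u₁ u₂ _ _ (fun _ => rfl) fun e => ?_)
  simp [Sym2.map_map, Function.comp_def]

lemma szM_bridgeGraph_inl_inr :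
    szM (bridgeGraph G₁ G₂ u₁ u₂) (.inl u₁) (.inr u₂) = #G₁.edgeFinset := by
  rw [(isIsometricLayering_bridgeGraph h₁ h₂).szM_eq_of_proj_eq (h₁.boxProd h₂)
    (c := .inl u₁) (d := .inr u₂) rfl (by simp), sum_edgeFinset_bridgeGraph]
  simp [Sym2.exists_mem]

lemma szM_bridgeGraph_inr_inl :
    szM (bridgeGraph G₁ G₂ u₁ u₂) (.inr u₂) (.inl u₁) = #G₂.edgeFinset := by
  rw [(isIsometricLayering_bridgeGraph h₁ h₂).szM_eq_of_proj_eq (h₁.boxProd h₂)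
    (c := .inr u₂) (d := .inl u₁) rfl (by simp), sum_edgeFinset_bridgeGraph]
  simp [Sym2.exists_mem]

lemma szM_contractBridge_inl_pendant :
    szM (contractBridge G₁ G₂ u₁ u₂) (.inl u₁) (.inr u₂) = #G₁.edgeFinset + #G₂.edgeFinset := by
  rw [(isIsometricLayering_contractBridge h₁ h₂).szM_eq_of_proj_eq (h₁.boxProd h₂)
    (c := .inl u₁) (d := .inr u₂) rfl (by simp), sum_edgeFinset_contractBridge]
  simp

lemma szM_contractBridge_pendant_inl :
    szM (contractBridge G₁ G₂ u₁ u₂) (.inr u₂) (.inl u₁) = 0 := by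
  rw [(isIsometricLayering_contractBridge h₁ h₂).szM_eq_of_proj_eq (h₁.boxProd h₂)
    (c := .inr u₂) (d := .inl u₁) rfl (by simp), sum_edgeFinset_contractBridge]
  simp [Sym2.exists_mem]

lemma edgeSzegedWeight_bridgeGraph_eq {c d : V₁ ⊕ V₂} (hcd : c.isRight = d.isRight) :
    edgeSzegedWeight (bridgeGraph G₁ G₂ u₁ u₂) s(c, d) =
      edgeSzegedWeight (contractBridge G₁ G₂ u₁ u₂)
        s(contractVert u₁ u₂ c, contractVert u₁ u₂ d) := by
  simp only [edgeSzegedWeight_mk, szM_bridgeGraph_eq h₁ h₂ hcd, szM_bridgeGraph_eq h₁ h₂ hcd.symm]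

lemma edgeVertexSzegedWeight_bridgeGraph_eq {c d : V₁ ⊕ V₂} (hcd : c.isRight = d.isRight) :
    edgeVertexSzegedWeight (bridgeGraph G₁ G₂ u₁ u₂) s(c, d) =
      edgeVertexSzegedWeight (contractBridge G₁ G₂ u₁ u₂)
        s(contractVert u₁ u₂ c, contractVert u₁ u₂ d) := by
  simp only [edgeVertexSzegedWeight_mk, szM_bridgeGraph_eq h₁ h₂ hcd,
    szM_bridgeGraph_eq h₁ h₂ hcd.symm, szN_bridgeGraph_eq h₁ h₂ hcd,
    szN_bridgeGraph_eq h₁ h₂ hcd.symm]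

lemma szE_add_eq :
    szE (bridgeGraph G₁ G₂ u₁ u₂) +
        edgeSzegedWeight (contractBridge G₁ G₂ u₁ u₂) s(.inl u₁, .inr u₂) =
      szE (contractBridge G₁ G₂ u₁ u₂) +
        edgeSzegedWeight (bridgeGraph G₁ G₂ u₁ u₂) s(.inl u₁, .inr u₂) := by
  rw [szE_eq_sum, szE_eq_sum]
  refine sum_edgeFinset_bridgeGraph_add_eq u₁ u₂ _ _ (Sym2.ind fun a b => ?_)
    (Sym2.ind fun a b => ?_)
  · exact edgeSzegedWeight_bridgeGraph_eq h₁ h₂ (c := .inl a) (d := .inl b) rfl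
  · exact edgeSzegedWeight_bridgeGraph_eq h₁ h₂ (c := .inr a) (d := .inr b) rfl

lemma sum_edgeVertexSzegedWeight_add_eq :
    ∑ e ∈ (bridgeGraph G₁ G₂ u₁ u₂).edgeFinset,
          edgeVertexSzegedWeight (bridgeGraph G₁ G₂ u₁ u₂) e +
        edgeVertexSzegedWeight (contractBridge G₁ G₂ u₁ u₂) s(.inl u₁, .inr u₂) =
      ∑ e ∈ (contractBridge G₁ G₂ u₁ u₂).edgeFinset,
          edgeVertexSzegedWeight (contractBridge G₁ G₂ u₁ u₂) e +
        edgeVertexSzegedWeight (bridgeGraph G₁ G₂ u₁ u₂) s(.inl u₁, .inr u₂) := by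
  refine sum_edgeFinset_bridgeGraph_add_eq u₁ u₂ _ _ (Sym2.ind fun a b => ?_)
    (Sym2.ind fun a b => ?_)
  · exact edgeVertexSzegedWeight_bridgeGraph_eq h₁ h₂ (c := .inl a) (d := .inl b) rfl
  · exact edgeVertexSzegedWeight_bridgeGraph_eq h₁ h₂ (c := .inr a) (d := .inr b) rfl

variable {x₀ : V₁} {y₀ : V₂} (hx₀ : G₁.Adj u₁ x₀) (hy₀ : G₂.Adj u₂ y₀)
include hx₀ hy₀

lemma szE_contractBridge_lt :
    szE (contractBridge G₁ G₂ u₁ u₂) < szE (bridgeGraph G₁ G₂ u₁ u₂) := by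
  have key := szE_add_eq h₁ h₂ (u₁ := u₁) (u₂ := u₂)
  rw [edgeSzegedWeight_mk, edgeSzegedWeight_mk, szM_contractBridge_pendant_inl h₁ h₂,
    szM_bridgeGraph_inl_inr h₁ h₂, szM_bridgeGraph_inr_inl h₁ h₂] at key
  have : 0 < #G₁.edgeFinset * #G₂.edgeFinset :=
    Nat.mul_pos (card_pos.mpr ⟨s(u₁, x₀), mem_edgeFinset.mpr hx₀⟩)
      (card_pos.mpr ⟨s(u₂, y₀), mem_edgeFinset.mpr hy₀⟩)
  omega

lemma szEV_contractBridge_lt :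
    szEV (contractBridge G₁ G₂ u₁ u₂) < szEV (bridgeGraph G₁ G₂ u₁ u₂) := by
  have key := sum_edgeVertexSzegedWeight_add_eq h₁ h₂ (u₁ := u₁) (u₂ := u₂)
  rw [edgeVertexSzegedWeight_mk, edgeVertexSzegedWeight_mk, szM_contractBridge_pendant_inl h₁ h₂,
    szN_contractBridge_pendant_inl h₁ h₂, szM_contractBridge_inl_pendant h₁ h₂,
    szM_bridgeGraph_inl_inr h₁ h₂, szM_bridgeGraph_inr_inl h₁ h₂, szN_bridgeGraph_inl_inr h₁ h₂,
    szN_bridgeGraph_inr_inl h₁ h₂] at key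
  have m₁ : 0 < #G₁.edgeFinset := card_pos.mpr ⟨s(u₁, x₀), mem_edgeFinset.mpr hx₀⟩
  have m₂ : 0 < #G₂.edgeFinset := card_pos.mpr ⟨s(u₂, y₀), mem_edgeFinset.mpr hy₀⟩
  have n₁ : 1 < Fintype.card V₁ := Fintype.one_lt_card_iff_nontrivial.mpr ⟨_, _, hx₀.ne⟩
  have n₂ : 1 < Fintype.card V₂ := Fintype.one_lt_card_iff_nontrivial.mpr ⟨_, _, hy₀.ne⟩
  have : ∑ e ∈ (contractBridge G₁ G₂ u₁ u₂).edgeFinset,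
        edgeVertexSzegedWeight (contractBridge G₁ G₂ u₁ u₂) e <
      ∑ e ∈ (bridgeGraph G₁ G₂ u₁ u₂).edgeFinset,
        edgeVertexSzegedWeight (bridgeGraph G₁ G₂ u₁ u₂) e := by
    nlinarith
  rw [szEV_eq_sum, szEV_eq_sum]
  have : (∑ e ∈ (contractBridge G₁ G₂ u₁ u₂).edgeFinset,
        (edgeVertexSzegedWeight (contractBridge G₁ G₂ u₁ u₂) e : ℚ)) <
      ∑ e ∈ (bridgeGraph G₁ G₂ u₁ u₂).edgeFinset,
        (edgeVertexSzegedWeight (bridgeGraph G₁ G₂ u₁ u₂) e : ℚ) := by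
    exact_mod_cast this
  linarith

end Szeged

end ContractBridge

open ContractBridge in
theorem szeged_contract_cut_edge_general {V₁ V₂ : Type*} [Fintype V₁] [Fintype V₂]
    (G₁ : SimpleGraph V₁) (G₂ : SimpleGraph V₂) (u₁ : V₁) (u₂ : V₂)
    (h₁ : G₁.Connected) (h₂ : G₂.Connected)
    (hd₁ : 2 ≤ (bridgeGraph G₁ G₂ u₁ u₂).degree (Sum.inl u₁))
    (hd₂ : 2 ≤ (bridgeGraph G₁ G₂ u₁ u₂).degree (Sum.inr u₂)) :
    szE (contractBridge G₁ G₂ u₁ u₂) < szE (bridgeGraph G₁ G₂ u₁ u₂) ∧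
      szEV (contractBridge G₁ G₂ u₁ u₂) < szEV (bridgeGraph G₁ G₂ u₁ u₂) := by
  obtain ⟨x, hx⟩ := exists_adj_of_two_le_degree_inl hd₁
  obtain ⟨y, hy⟩ := exists_adj_of_two_le_degree_inr hd₂
  exact ⟨szE_contractBridge_lt h₁ h₂ hx hy, szEV_contractBridge_lt h₁ h₂ hx hy⟩

/-- Let `G` be a connected graph with a cut edge `u₁u₂` both of whose endpoints
have degree at least `2` in `G`, and let `G₁`, `G₂` be the components of
`G - u₁u₂` containing `u₁`, `u₂` respectively.  Let `G'` be obtained from `G` by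
contracting the edge `u₁u₂` and attaching a pendant edge at the contracted
vertex.  Then `Sz_e(G') < Sz_e(G)` and `Sz_ev(G') < Sz_ev(G)`. -/
theorem szeged_contract_cut_edge {V₁ V₂ : Type*} [Fintype V₁] [Fintype V₂]
    (G₁ : SimpleGraph V₁) (G₂ : SimpleGraph V₂) (u₁ : V₁) (u₂ : V₂)
    (h₁ : G₁.Connected) (h₂ : G₂.Connected)
    (hG : (bridgeGraph G₁ G₂ u₁ u₂).Connected)
    (hd₁ : 2 ≤ (bridgeGraph G₁ G₂ u₁ u₂).degree (Sum.inl u₁))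
    (hd₂ : 2 ≤ (bridgeGraph G₁ G₂ u₁ u₂).degree (Sum.inr u₂)) :
    szE (contractBridge G₁ G₂ u₁ u₂) < szE (bridgeGraph G₁ G₂ u₁ u₂) ∧
      szEV (contractBridge G₁ G₂ u₁ u₂) < szEV (bridgeGraph G₁ G₂ u₁ u₂) :=
  szeged_contract_cut_edge_general G₁ G₂ u₁ u₂ h₁ h₂ hd₁ hd₂
end
end
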